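/- Let a, b ∈ ℝ with b > 0, and let ρ₁(a,b) be the 6×6 matrix (1/(2(a²+b²))) · [[a²,0,0,0,ab,0],[0,b²,0,0,0,ab],[0,0,0,0,0,0],[0,0,0,0,0,0],[ab,0,0,0,b²,0],[0,ab,0,0,0,a²]], regarded as a 2⊗3 state. Then the negativity of ρ₁(a,b) is N(ρ₁(a,b)) = (b√(b²+4a²) − b²)/(a²+b²), and hence N(ρ₁(a,b))² = (2b⁴ + 4a²b² − 2b³√(b²+4a²))/(a²+b²)². -/

import Mathlib

open Matrix BigOperators Polynomial
open scoped Kronecker ComplexOrder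

noncomputable section

/-- Squared Hilbert–Schmidt norm `‖C‖² = Tr(CᴴC)`. -/
def hsNormSq {d : Type*} [Fintype d] (C : Matrix d d ℂ) : ℝ :=
  (Matrix.trace (Cᴴ * C)).re

/-- The square root of a positive semidefinite matrix, as `Matrix.PosSemidef.sqrt` was defined
in the older Mathlib (removed since). -/
def Matrix.PosSemidef.sqrt {n : Type*} [Fintype n] [DecidableEq n] {𝕜 : Type*} [RCLike 𝕜]
    {A : Matrix n n 𝕜} (hA : A.PosSemidef) : Matrix n n 𝕜 :=
  hA.1.eigenvectorUnitary.1 * diagonal ((↑) ∘ (fun x : ℝ => Real.sqrt x) ∘ hA.1.eigenvalues) *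
  (star hA.1.eigenvectorUnitary : Matrix n n 𝕜)

/-- Trace norm `‖X‖₁ = Tr √(XᴴX)`. -/
def traceNorm {d : Type*} [Fintype d] [DecidableEq d] (X : Matrix d d ℂ) : ℝ :=
  ((Matrix.posSemidef_conjTranspose_mul_self X).sqrt.trace).re

/-- Partial transpose on the first factor: `ρ^Γ((i,k),(j,l)) = ρ((j,k),(i,l))`. -/
def ptranspose {m n : ℕ} (ρ : Matrix (Fin m × Fin n) (Fin m × Fin n) ℂ) :
    Matrix (Fin m × Fin n) (Fin m × Fin n) ℂ :=
  Matrix.of fun p q => ρ (q.1, p.2) (p.1, q.2)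

/-- Negativity `N(ρ) = (‖ρ^Γ‖₁ - 1)/(m-1)`. -/
def negativity {m n : ℕ} (ρ : Matrix (Fin m × Fin n) (Fin m × Fin n) ℂ) : ℝ :=
  (traceNorm (ptranspose ρ) - 1) / ((m : ℝ) - 1)

/-- `ψ` is an orthonormal basis of `ℂ^m` (an orthonormal family of `m` vectors). -/
def IsONB {m : ℕ} (ψ : Fin m → (Fin m → ℂ)) : Prop :=
  ∀ k l, (∑ i, star (ψ k i) * ψ l i) = if k = l then 1 else 0

/-- The rank-one projector `|v⟩⟨v|`. -/
def proj {m : ℕ} (v : Fin m → ℂ) : Matrix (Fin m) (Fin m) ℂ :=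
  Matrix.vecMulVec v (fun j => star (v j))

/-- The von Neumann measurement map
`Π^A(ρ) = ∑ k, (|ψ_k⟩⟨ψ_k| ⊗ I_n) ρ (|ψ_k⟩⟨ψ_k| ⊗ I_n)`. -/
def piA {m n : ℕ} (ψ : Fin m → (Fin m → ℂ))
    (ρ : Matrix (Fin m × Fin n) (Fin m × Fin n) ℂ) :
    Matrix (Fin m × Fin n) (Fin m × Fin n) ℂ :=
  ∑ k, (proj (ψ k) ⊗ₖ (1 : Matrix (Fin n) (Fin n) ℂ)) * ρ *
       (proj (ψ k) ⊗ₖ (1 : Matrix (Fin n) (Fin n) ℂ))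

/-- Geometric discord
`D(ρ) = (m/(m-1)) · inf over von Neumann measurements of ‖ρ - Π^A(ρ)‖²`. -/
def gd {m n : ℕ} (ρ : Matrix (Fin m × Fin n) (Fin m × Fin n) ℂ) : ℝ :=
  ((m : ℝ) / ((m : ℝ) - 1)) *
    ⨅ ψ : {ψ : Fin m → (Fin m → ℂ) // IsONB ψ}, hsNormSq (ρ - piA ψ.1 ρ)

/-- An `m ⊗ n` state: positive semidefinite with trace one. -/
def IsState {m n : ℕ} (ρ : Matrix (Fin m × Fin n) (Fin m × Fin n) ℂ) : Prop :=
  ρ.PosSemidef ∧ ρ.trace = 1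

/-- Reindex a `6 × 6` matrix by `Fin 2 × Fin 3` with the ordering
`(1,1),(1,2),(1,3),(2,1),(2,2),(2,3)`. -/
def ofM6 (M : Matrix (Fin 6) (Fin 6) ℂ) :
    Matrix (Fin 2 × Fin 3) (Fin 2 × Fin 3) ℂ :=
  Matrix.of fun p q =>
    M ⟨p.1.val * 3 + p.2.val, by have := p.1.isLt; have := p.2.isLt; omega⟩
      ⟨q.1.val * 3 + q.2.val, by have := q.1.isLt; have := q.2.isLt; omega⟩

/-- The family of states `ρ₁(a,b)`. -/
def rho1 (a b : ℝ) : Matrix (Fin 2 × Fin 3) (Fin 2 × Fin 3) ℂ :=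
  ofM6 ((1 / (2 * ((a : ℂ)^2 + (b : ℂ)^2))) •
    !![(a:ℂ)^2, 0, 0, 0, (a:ℂ)*(b:ℂ), 0;
       0, (b:ℂ)^2, 0, 0, 0, (a:ℂ)*(b:ℂ);
       0, 0, 0, 0, 0, 0;
       0, 0, 0, 0, 0, 0;
       (a:ℂ)*(b:ℂ), 0, 0, 0, (b:ℂ)^2, 0;
       0, (a:ℂ)*(b:ℂ), 0, 0, 0, (a:ℂ)^2])

/-
Up to the factor `1 / (2(a² + b²))`, the partial transpose `ρ₁(a,b)^Γ` is the direct sum of two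
`1 × 1` blocks `a²` and two `2 × 2` blocks with eigenvalues `(b² ± b√(b² + 4a²)) / 2`. Its absolute
value can therefore be written down explicitly; it is positive semidefinite and squares to
`(ρ₁^Γ)ᴴ ρ₁^Γ`, so by uniqueness of positive square roots it is the matrix whose trace defines the
trace norm. That trace is `(a² + b√(b² + 4a²)) / (a² + b²)`.
-/

lemma Matrix.trace_submatrix_equiv {m n R : Type*} [Fintype m] [Fintype n] [AddCommMonoid R]
    (M : Matrix n n R) (e : m ≃ n) : (M.submatrix e e).trace = M.trace :=
  e.sum_comp fun i => M i i

open scoped MatrixOrder in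
lemma Matrix.PosSemidef.eq_sqrt_of_mul_self_eq {n : Type*} [Fintype n] [DecidableEq n]
    {A S : Matrix n n ℂ} (hA : A.PosSemidef) (hS : S.PosSemidef) (h : S * S = A) :
    S = hA.sqrt := by
  have hcfc : hA.sqrt = cfc Real.sqrt A := by
    rw [hA.1.cfc_eq]
    simp [Matrix.PosSemidef.sqrt, Matrix.IsHermitian.cfc, Unitary.conjStarAlgAut_apply]
  rw [hcfc, ← cfcₙ_eq_cfc, ← CFC.sqrt_eq_real_sqrt A hA.nonneg]
  exact (CFC.sqrt_unique h hS.nonneg).symm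

lemma traceNorm_eq_re_trace_of_mul_self_eq {d : Type*} [Fintype d] [DecidableEq d]
    {X S : Matrix d d ℂ} (hS : S.PosSemidef) (h : S * S = Xᴴ * X) :
    traceNorm X = S.trace.re := by
  rw [traceNorm, ← (posSemidef_conjTranspose_mul_self X).eq_sqrt_of_mul_self_eq hS h]

lemma ofM6_eq_submatrix (M : Matrix (Fin 6) (Fin 6) ℂ) :
    ofM6 M = M.submatrix finProdFinEquiv finProdFinEquiv := by
  ext p q
  simp only [ofM6, of_apply, submatrix_apply]
  congr 1 <;> ext <;> simp only [finProdFinEquiv_apply_val] <;> ring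

section rho1

variable (a b : ℝ)

def rho1Gamma : Matrix (Fin 6) (Fin 6) ℂ :=
  !![(a : ℂ) ^ 2, 0, 0, 0, 0, 0;
     0, (b : ℂ) ^ 2, 0, (a : ℂ) * (b : ℂ), 0, 0;
     0, 0, 0, 0, (a : ℂ) * (b : ℂ), 0;
     0, (a : ℂ) * (b : ℂ), 0, 0, 0, 0;
     0, 0, (a : ℂ) * (b : ℂ), 0, (b : ℂ) ^ 2, 0;
     0, 0, 0, 0, 0, (a : ℂ) ^ 2]

lemma ptranspose_rho1 :
    ptranspose (rho1 a b) = ofM6 ((2 * (a ^ 2 + b ^ 2))⁻¹ • rho1Gamma a b) := by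
  ext ⟨i, k⟩ ⟨j, l⟩
  fin_cases i <;> fin_cases j <;> fin_cases k <;> fin_cases l <;>
    simp [ptranspose, rho1, ofM6, rho1Gamma]

lemma rho1Gamma_isHermitian : (rho1Gamma a b).IsHermitian := by
  ext i j
  fin_cases i <;> fin_cases j <;> simp [rho1Gamma]

/- For `s = √(b² + 4a²)` this is `s • |rho1Gamma a b|`: on each `2 × 2` block `M` (with `det M < 0`)
`|M| = (M² - det M • 1) / √(tr M ² - 4 det M)`. -/
def scaledAbsRho1Gamma (s : ℝ) : Matrix (Fin 6) (Fin 6) ℂ :=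
  !![(s : ℂ) * (a : ℂ) ^ 2, 0, 0, 0, 0, 0;
     0, (b : ℂ) ^ 3 + 2 * (a : ℂ) ^ 2 * (b : ℂ), 0, (a : ℂ) * (b : ℂ) ^ 2, 0, 0;
     0, 0, 2 * (a : ℂ) ^ 2 * (b : ℂ), 0, (a : ℂ) * (b : ℂ) ^ 2, 0;
     0, (a : ℂ) * (b : ℂ) ^ 2, 0, 2 * (a : ℂ) ^ 2 * (b : ℂ), 0, 0;
     0, 0, (a : ℂ) * (b : ℂ) ^ 2, 0, (b : ℂ) ^ 3 + 2 * (a : ℂ) ^ 2 * (b : ℂ), 0;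
     0, 0, 0, 0, 0, (s : ℂ) * (a : ℂ) ^ 2]

lemma scaledAbsRho1Gamma_mul_self {s : ℝ} (hs : s ^ 2 = b ^ 2 + 4 * a ^ 2) :
    scaledAbsRho1Gamma a b s * scaledAbsRho1Gamma a b s =
      (b ^ 2 + 4 * a ^ 2) • (rho1Gamma a b * rho1Gamma a b) := by
  have hsC : (s : ℂ) ^ 2 = (b : ℂ) ^ 2 + 4 * (a : ℂ) ^ 2 := by exact_mod_cast hs
  ext i j
  fin_cases i <;> fin_cases j <;>
    simp [scaledAbsRho1Gamma, rho1Gamma, mul_apply, Fin.sum_univ_succ] <;>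
    first | ring1 | linear_combination (a : ℂ) ^ 4 * hsC

lemma scaledAbsRho1Gamma_eq_diagonal_add (s : ℝ) : scaledAbsRho1Gamma a b s =
    diagonal (fun i =>
        ((![s * a ^ 2, 2 * a ^ 2 * b, a ^ 2 * b, a ^ 2 * b, 2 * a ^ 2 * b, s * a ^ 2] i : ℝ) : ℂ))
      + b • vecMulVec ![0, (b : ℂ), 0, (a : ℂ), 0, 0] (star ![0, (b : ℂ), 0, (a : ℂ), 0, 0])
      + b • vecMulVec ![0, 0, (a : ℂ), 0, (b : ℂ), 0] (star ![0, 0, (a : ℂ), 0, (b : ℂ), 0]) := by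
  ext i j
  fin_cases i <;> fin_cases j <;>
    simp [scaledAbsRho1Gamma, vecMulVec, diagonal] <;> ring

lemma scaledAbsRho1Gamma_posSemidef {s : ℝ} (hb : 0 ≤ b) (hs : 0 ≤ s) :
    (scaledAbsRho1Gamma a b s).PosSemidef := by
  rw [scaledAbsRho1Gamma_eq_diagonal_add]
  refine .add (.add ?_ ((posSemidef_vecMulVec_self_star _).smul hb))
    ((posSemidef_vecMulVec_self_star _).smul hb)
  refine posSemidef_diagonal_iff.mpr fun i => Complex.zero_le_real.mpr ?_
  fin_cases i <;> simp <;> positivity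

lemma trace_scaledAbsRho1Gamma (s : ℝ) :
    (scaledAbsRho1Gamma a b s).trace = 2 * s * a ^ 2 + 2 * b ^ 3 + 8 * a ^ 2 * b := by
  simp [trace, Fin.sum_univ_succ, scaledAbsRho1Gamma]
  ring

end rho1

lemma traceNorm_ptranspose_rho1 (a : ℝ) {b : ℝ} (hb : 0 < b) :
    traceNorm (ptranspose (rho1 a b)) =
      (a ^ 2 + b * Real.sqrt (b ^ 2 + 4 * a ^ 2)) / (a ^ 2 + b ^ 2) := by
  set s := Real.sqrt (b ^ 2 + 4 * a ^ 2)
  have hs : s ^ 2 = b ^ 2 + 4 * a ^ 2 := Real.sq_sqrt (by positivity)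
  have hs_pos : 0 < s := Real.sqrt_pos.mpr (by positivity)
  set c : ℝ := (2 * (a ^ 2 + b ^ 2))⁻¹
  have hScalar : c / s * (c / s) * (b ^ 2 + 4 * a ^ 2) = c * c := by
    rw [← hs]; field_simp
  have hS : (ofM6 ((c / s) • scaledAbsRho1Gamma a b s)).PosSemidef := by
    rw [ofM6_eq_submatrix]
    exact ((scaledAbsRho1Gamma_posSemidef a b hb.le hs_pos.le).smul (by positivity)).submatrix _
  rw [traceNorm_eq_re_trace_of_mul_self_eq hS, ofM6_eq_submatrix, trace_submatrix_equiv,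
    trace_smul, trace_scaledAbsRho1Gamma, Complex.smul_re]
  · simp only [← Complex.ofReal_pow, ← Complex.ofReal_mul, ← Complex.ofReal_ofNat,
      ← Complex.ofReal_add, Complex.ofReal_re, smul_eq_mul, c]
    field_simp
    linear_combination (-2 * b) * hs
  · rw [ptranspose_rho1, ofM6_eq_submatrix, ofM6_eq_submatrix, conjTranspose_submatrix,
      submatrix_mul_equiv, submatrix_mul_equiv, conjTranspose_smul, star_trivial,
      (rho1Gamma_isHermitian a b).eq, smul_mul_smul_comm, smul_mul_smul_comm,
      scaledAbsRho1Gamma_mul_self a b hs, smul_smul, hScalar]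

theorem negativity_rho1 (a : ℝ) {b : ℝ} (hb : 0 < b) :
    negativity (rho1 a b) = (b * Real.sqrt (b ^ 2 + 4 * a ^ 2) - b ^ 2) / (a ^ 2 + b ^ 2) := by
  rw [negativity, traceNorm_ptranspose_rho1 a hb]
  field_simp
  norm_num
  ring

theorem stmt10 (a b : ℝ) (hb : 0 < b) :
    negativity (rho1 a b) =
      (b * Real.sqrt (b ^ 2 + 4 * a ^ 2) - b ^ 2) / (a ^ 2 + b ^ 2) ∧
    negativity (rho1 a b) ^ 2 =
      (2 * b ^ 4 + 4 * a ^ 2 * b ^ 2 -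
        2 * b ^ 3 * Real.sqrt (b ^ 2 + 4 * a ^ 2)) / (a ^ 2 + b ^ 2) ^ 2 := by
  refine ⟨negativity_rho1 a hb, ?_⟩
  rw [negativity_rho1 a hb, div_pow]
  have hs : Real.sqrt (b ^ 2 + 4 * a ^ 2) ^ 2 = b ^ 2 + 4 * a ^ 2 := Real.sq_sqrt (by positivity)
  linear_combination b ^ 2 * hs / (a ^ 2 + b ^ 2) ^ 2

end
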